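/- Let X be a compact metric space, f : X → X a continuous map with the s-limit shadowing property, C a chain component of f, and D ∈ D(C) a class of the chain proximal relation. Then for any x, y ∈ V^s(D) and ε > 0 there is z ∈ V^s(D) with d(y, z) ≤ ε and lim_{i→∞} d(f^i(x), f^i(z)) = 0. -/

import Mathlib

open Filter Topology Metric Set

variable {X : Type*} [MetricSpace X]

/-- There is a `δ`-chain of `f` from `x` to `y`. -/
def ChainReach (f : X → X) (δ : ℝ) (x y : X) : Prop :=
  ∃ k : ℕ, 0 < k ∧ ∃ c : ℕ → X, c 0 = x ∧ c k = y ∧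
    ∀ i < k, dist (f (c i)) (c (i + 1)) ≤ δ

/-- `x → y` : for every `δ > 0` there is a `δ`-chain from `x` to `y`. -/
def ChainTo (f : X → X) (x y : X) : Prop := ∀ δ > 0, ChainReach f δ x y

/-- The chain recurrent set. -/
def CR (f : X → X) : Set X := {x | ChainTo f x x}

/-- The relation `x ↔ y`. -/
def ChainRel (f : X → X) (x y : X) : Prop := ChainTo f x y ∧ ChainTo f y x

/-- A chain component: an equivalence class of `↔` on `CR f`. -/
def IsChainComponent (f : X → X) (C : Set X) : Prop :=
  ∃ x ∈ CR f, C = {y | y ∈ CR f ∧ ChainRel f x y}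

/-- A `δ`-chain of `f` from `x` to `y` of length `k`, all of whose points lie in `S`. -/
def ChainInLen (f : X → X) (S : Set X) (δ : ℝ) (x y : X) (k : ℕ) : Prop :=
  0 < k ∧ ∃ c : ℕ → X, (∀ i ≤ k, c i ∈ S) ∧ c 0 = x ∧ c k = y ∧
    ∀ i < k, dist (f (c i)) (c (i + 1)) ≤ δ

/-- There is a `δ`-chain from `x` to `y` inside `S`. -/
def ChainInReach (f : X → X) (S : Set X) (δ : ℝ) (x y : X) : Prop :=
  ∃ k, ChainInLen f S δ x y k

/-- `f` restricted to `S` is chain transitive. -/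
def ChainTransitiveOn (f : X → X) (S : Set X) : Prop :=
  ∀ x ∈ S, ∀ y ∈ S, ∀ δ > 0, ChainInReach f S δ x y

/-- The set of lengths of `δ`-cycles of `f` restricted to `C`. -/
def cycLengths (f : X → X) (C : Set X) (δ : ℝ) : Set ℕ :=
  {k | ∃ x ∈ C, ChainInLen f C δ x x k}

/-- The relation `∼_{C,δ}` : there is a `δ`-chain in `C` from `x` to `y` whose
length is divisible by the gcd `m(C,δ)` of all `δ`-cycle lengths (divisibility by
the gcd is expressed via common divisors). -/
def relCdelta (f : X → X) (C : Set X) (δ : ℝ) (x y : X) : Prop :=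
  ∃ k : ℕ, (∀ d : ℕ, (∀ l ∈ cycLengths f C δ, d ∣ l) → d ∣ k) ∧
    ChainInLen f C δ x y k

/-- The chain proximal relation `∼_C`. -/
def relC (f : X → X) (C : Set X) (x y : X) : Prop := ∀ δ > 0, relCdelta f C δ x y

/-- The class of `∼_{C,δ}` containing `x`. -/
def classCdelta (f : X → X) (C : Set X) (δ : ℝ) (x : X) : Set X :=
  {y | y ∈ C ∧ relCdelta f C δ x y}

/-- The class of `∼_C` containing `x`. -/
def classC (f : X → X) (C : Set X) (x : X) : Set X :=
  {y | y ∈ C ∧ relC f C x y}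

/-- The basin of attraction of a set. -/
def basin (f : X → X) (C : Set X) : Set X :=
  {x | Tendsto (fun i => infDist (f^[i] x) C) atTop (𝓝 0)}

/-- `V^s(D)` for the class `D` of `∼_C` containing the point `x ∈ C`. -/
def Vs (f : X → X) (C : Set X) (x : X) : Set X :=
  {z | z ∈ basin f C ∧ ∀ δ > 0,
    Tendsto (fun i => infDist (f^[i] z) (f^[i] '' classCdelta f C δ x)) atTop (𝓝 0)}

/-- `(x i)` is a `δ`-limit-pseudo orbit of `f`. -/
def LimitPseudoOrbit (f : X → X) (δ : ℝ) (x : ℕ → X) : Prop :=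
  (∀ i, dist (f (x i)) (x (i + 1)) ≤ δ) ∧
  Tendsto (fun i => dist (f (x i)) (x (i + 1))) atTop (𝓝 0)

/-- `f` has the s-limit shadowing property. -/
def SLimitShadowing (f : X → X) : Prop :=
  ∀ ε > 0, ∃ δ > 0, ∀ x : ℕ → X, LimitPseudoOrbit f δ x →
    ∃ z : X, (∀ i, dist (f^[i] z) (x i) ≤ ε) ∧
      Tendsto (fun i => dist (f^[i] z) (x i)) atTop (𝓝 0)

/-- `f` has the shadowing property. -/
def Shadowing (f : X → X) : Prop :=
  ∀ ε > 0, ∃ δ > 0, ∀ x : ℕ → X, (∀ i, dist (f (x i)) (x (i + 1)) ≤ δ) →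
    ∃ z : X, ∀ i, dist (f^[i] z) (x i) ≤ ε

/-!
Shadow the limit pseudo-orbit that follows the orbit of `y` up to a large time `n`, jumps to
`f^n d` for a point `d` of the class `D_δ` with `f^n d` close to `f^n y`, runs along a `δ`-chain
in `C` of a fixed length `k` to `f^(n+k) e`, where `e ∈ D_δ` and `f^(n+k) e` is close to
`f^(n+k) x`, and then follows the orbit of `x`. Chains of exact length `k` exist because `C` is
chain transitive, the lengths of any two `δ`-chains in `C` with the same endpoints agree modulo
the gcd `m` of the `δ`-cycle lengths, and every large multiple of `m` is the length of a cycle.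
The shadowing point is `ε`-close to `y` and asymptotic to `x`, hence lies in `V^s(D)`.
-/

section Chains

variable {f : X → X} {S T : Set X} {δ δ' η ρ : ℝ} {a b c a' b' : X} {k l : ℕ}

lemma ChainInLen.mono (h : ChainInLen f S δ a b k) (hδ : δ ≤ δ') : ChainInLen f S δ' a b k := by
  obtain ⟨hk, c, hcS, hc0, hck, hc⟩ := h
  exact ⟨hk, c, hcS, hc0, hck, fun i hi => (hc i hi).trans hδ⟩

lemma ChainInLen.left_mem (h : ChainInLen f S δ a b k) : a ∈ S := by
  obtain ⟨-, c, hcS, rfl, -⟩ := h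
  exact hcS 0 (Nat.zero_le k)

lemma ChainInLen.right_mem (h : ChainInLen f S δ a b k) : b ∈ S := by
  obtain ⟨-, c, hcS, -, rfl, -⟩ := h
  exact hcS k le_rfl

lemma ChainInLen.mono_set (h : ChainInLen f S δ a b k) (hST : S ⊆ T) : ChainInLen f T δ a b k := by
  obtain ⟨hk, c, hcS, hc⟩ := h
  exact ⟨hk, c, fun i hi => hST (hcS i hi), hc⟩

lemma ChainInLen.append (h₁ : ChainInLen f S δ a b k) (h₂ : ChainInLen f S δ b c l) :
    ChainInLen f S δ a c (k + l) := by
  obtain ⟨hk, p, hpS, rfl, rfl, hp⟩ := h₁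
  obtain ⟨hl, q, hqS, hq0, rfl, hq⟩ := h₂
  refine ⟨by omega, fun i => if i < k then p i else q (i - k), fun i hi => ?_, by simp [hk],
    by simp, fun i hi => ?_⟩
  · dsimp only
    split_ifs with h
    exacts [hpS i h.le, hqS _ (by omega)]
  · rcases lt_trichotomy (i + 1) k with h | h | h
    · simpa [h, (Nat.lt_succ_self i).trans h] using hp i (by omega)
    · simpa [← h, hq0] using hp i (by omega)
    · simpa [show ¬ i < k by omega, show ¬ i + 1 < k by omega, show i + 1 - k = i - k + 1 by omega]
        using hq (i - k) (by omega)

lemma chainInLen_one (ha : a ∈ S) (hb : b ∈ S) (hab : dist (f a) b ≤ δ) :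
    ChainInLen f S δ a b 1 :=
  ⟨one_pos, fun i => if i = 0 then a else b, fun i _ => by dsimp only; split_ifs <;> assumption,
    rfl, rfl, fun i hi => by simpa [Nat.lt_one_iff.mp hi] using hab⟩

lemma ChainInLen.append_iterate (hS : MapsTo f S S) (hδ : 0 ≤ δ) (h : ChainInLen f S δ a b k) :
    ∀ n, ChainInLen f S δ a (f^[n] b) (k + n)
  | 0 => h
  | n + 1 => by
    have hb : f^[n] b ∈ S := hS.iterate n h.right_mem
    have := (h.append_iterate hS hδ n).append (chainInLen_one hb (hS hb) (by simpa using hδ))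
    rwa [← Function.iterate_succ_apply' f n b] at this

lemma ChainInLen.exists_tail (h : ChainInLen f S δ a b (k + 1)) (hk : 0 < k) :
    ∃ a₁, dist (f a) a₁ ≤ δ ∧ ChainInLen f S δ a₁ b k := by
  obtain ⟨-, c, hcS, rfl, rfl, hc⟩ := h
  exact ⟨c 1, hc 0 (by omega), hk, fun i => c (i + 1), fun i hi => hcS _ (by omega), rfl, rfl,
    fun i hi => hc _ (by omega)⟩

lemma ChainInLen.perturb (hρ : ∀ ⦃p q⦄, dist p q ≤ η → dist (f p) (f q) ≤ ρ)
    (h : ChainInLen f T δ a b k) (hnear : ∀ p ∈ T, ∃ q ∈ S, dist q p ≤ η)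
    (ha : a' ∈ S) (hb : b' ∈ S) (haa : dist a' a ≤ η) (hbb : dist b b' ≤ η) :
    ChainInLen f S (ρ + δ + η) a' b' k := by
  obtain ⟨hk, c, hcT, rfl, rfl, hc⟩ := h
  choose! q hqS hqc using hnear
  set c' : ℕ → X := fun i => if i = 0 then a' else if i = k then b' else q (c i) with hc'
  have hc'S : ∀ i ≤ k, c' i ∈ S := fun i hi => by
    simp only [hc']; split_ifs
    exacts [ha, hb, hqS _ (hcT i hi)]
  have hc'c : ∀ i ≤ k, dist (c' i) (c i) ≤ η := fun i hi => by
    simp only [hc']; split_ifs with h0 hk'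
    exacts [h0 ▸ haa, hk' ▸ dist_comm b' _ ▸ hbb, hqc _ (hcT i hi)]
  refine ⟨hk, c', hc'S, by simp [hc'], by simp [hc', hk.ne'], fun i hi => ?_⟩
  calc dist (f (c' i)) (c' (i + 1))
      ≤ dist (f (c' i)) (f (c i)) + dist (f (c i)) (c (i + 1)) + dist (c (i + 1)) (c' (i + 1)) :=
        dist_triangle4 _ _ _ _
    _ ≤ ρ + δ + η := add_le_add_three (hρ (hc'c i hi.le)) (hc i hi)
        (dist_comm (c' _) _ ▸ hc'c _ hi)

end Chains

section ChainReach

variable {f : X → X} {δ δ' η ρ : ℝ} {a b c a' b' p : X}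

lemma chainReach_iff_exists_chainInLen :
    ChainReach f δ a b ↔ ∃ k, ChainInLen f univ δ a b k :=
  ⟨fun ⟨k, hk, c, hc⟩ => ⟨k, hk, c, fun _ _ => trivial, hc⟩,
    fun ⟨k, hk, c, _, hc⟩ => ⟨k, hk, c, hc⟩⟩

lemma ChainInLen.chainReach {S : Set X} {k : ℕ} (h : ChainInLen f S δ a b k) :
    ChainReach f δ a b :=
  chainReach_iff_exists_chainInLen.mpr ⟨k, h.mono_set (subset_univ S)⟩

lemma ChainReach.mono (h : ChainReach f δ a b) (hδ : δ ≤ δ') : ChainReach f δ' a b := by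
  obtain ⟨k, hk⟩ := chainReach_iff_exists_chainInLen.mp h
  exact (hk.mono hδ).chainReach

lemma ChainReach.trans (h₁ : ChainReach f δ a b) (h₂ : ChainReach f δ b c) :
    ChainReach f δ a c := by
  obtain ⟨k, hk⟩ := chainReach_iff_exists_chainInLen.mp h₁
  obtain ⟨l, hl⟩ := chainReach_iff_exists_chainInLen.mp h₂
  exact (hk.append hl).chainReach

lemma chainReach_apply (hδ : 0 ≤ δ) (a : X) : ChainReach f δ a (f a) :=
  (chainInLen_one (S := univ) trivial trivial (by simpa using hδ)).chainReach

lemma ChainReach.perturb (hρ : ∀ ⦃p q⦄, dist p q ≤ η → dist (f p) (f q) ≤ ρ)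
    (h : ChainReach f δ a b) (haa : dist a' a ≤ η) (hbb : dist b b' ≤ η) :
    ChainReach f (ρ + δ + η) a' b' := by
  obtain ⟨k, hk⟩ := chainReach_iff_exists_chainInLen.mp h
  exact (hk.perturb hρ (fun q _ => ⟨q, trivial, (dist_self q).trans_le (dist_nonneg.trans haa)⟩)
    trivial trivial haa hbb).chainReach

def deltaChainClass (f : X → X) (δ : ℝ) (p : X) : Set X :=
  {q | ChainReach f δ p q ∧ ChainReach f δ q p}

lemma deltaChainClass_mono (hδ : δ ≤ δ') : deltaChainClass f δ p ⊆ deltaChainClass f δ' p :=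
  fun _ hq => ⟨hq.1.mono hδ, hq.2.mono hδ⟩

lemma ChainInLen.to_deltaChainClass {k : ℕ} (h : ChainInLen f univ δ a b k)
    (ha : a ∈ deltaChainClass f δ p) (hb : b ∈ deltaChainClass f δ p) :
    ChainInLen f (deltaChainClass f δ p) δ a b k := by
  obtain ⟨hk, c, -, rfl, rfl, hc⟩ := h
  have hseg : ∀ i j, i < j → j ≤ k → ChainReach f δ (c i) (c j) := fun i j hij hj =>
    ⟨j - i, by omega, fun t => c (i + t), rfl, congrArg c (Nat.add_sub_cancel' hij.le),
      fun t ht => by simpa [add_assoc] using hc (i + t) (by omega)⟩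
  refine ⟨hk, c, fun i hi => ⟨?_, ?_⟩, rfl, rfl, hc⟩
  · rcases Nat.eq_zero_or_pos i with rfl | hi0
    exacts [ha.1, ha.1.trans (hseg 0 i hi0 hi)]
  · rcases hi.eq_or_lt with rfl | hik
    exacts [hb.2, (hseg i k hik le_rfl).trans hb.2]

end ChainReach

section ChainComponent

variable {f : X → X} {C : Set X} {δ : ℝ} {a b p : X}

lemma UniformContinuous.exists_le_forall_dist_apply_le (hf : UniformContinuous f) {ε : ℝ}
    (hε : 0 < ε) : ∃ η > 0, η ≤ ε ∧ ∀ ⦃a b⦄, dist a b ≤ η → dist (f a) (f b) ≤ ε := by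
  obtain ⟨η, hη, hfη⟩ := Metric.uniformContinuous_iff_le.mp hf ε hε
  exact ⟨min η ε, lt_min hη hε, min_le_right _ _, fun a b h => hfη (h.trans (min_le_left _ _))⟩

lemma closure_deltaChainClass_subset (hf : UniformContinuous f) (hδ : 0 < δ) :
    ∃ δ' > 0, closure (deltaChainClass f δ' p) ⊆ deltaChainClass f δ p := by
  obtain ⟨η, hη, hηδ, hfη⟩ := hf.exists_le_forall_dist_apply_le (by positivity : 0 < δ / 3)
  have hsum : δ / 3 + η + η ≤ δ := by linarith
  refine ⟨η, hη, fun q hq => ?_⟩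
  obtain ⟨r, hr, hqr⟩ := Metric.mem_closure_iff.mp hq η hη
  exact ⟨(hr.1.perturb hfη (by simpa using hη.le) (dist_comm q r ▸ hqr.le)).mono hsum,
    (hr.2.perturb hfη hqr.le (by simpa using hη.le)).mono hsum⟩

lemma exists_deltaChainClass_subset [CompactSpace X] (hf : UniformContinuous f) {U : Set X}
    (hU : IsOpen U) (hsub : {q | ChainTo f p q ∧ ChainTo f q p} ⊆ U) :
    ∃ δ > 0, deltaChainClass f δ p ⊆ U := by
  let V : Ioi (0 : ℝ) → Set X := fun δ => closure (deltaChainClass f δ p)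
  have hV : Monotone V := fun δ₁ δ₂ h => closure_mono (deltaChainClass_mono h)
  have : Nonempty (Ioi (0 : ℝ)) := ⟨⟨1, mem_Ioi.mpr one_pos⟩⟩
  have hcap : ∀ q ∈ ⋂ i, V i, U ∈ 𝓝 q := fun q hq => by
    have hqε : ∀ ε > 0, q ∈ deltaChainClass f ε p := fun ε hε => by
      obtain ⟨ε', hε', hcl⟩ := closure_deltaChainClass_subset (p := p) hf hε
      exact hcl (mem_iInter.mp hq ⟨ε', hε'⟩)
    exact hU.mem_nhds (hsub ⟨fun ε hε => (hqε ε hε).1, fun ε hε => (hqε ε hε).2⟩)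
  obtain ⟨⟨δ, hδ⟩, hδU⟩ := exists_subset_nhds_of_isCompact hV.directed_ge
    (fun _ => isClosed_closure.isCompact) hcap
  exact ⟨δ, hδ, subset_closure.trans hδU⟩

lemma ChainTo.apply_left (hf : UniformContinuous f) (h : ChainTo f a b) (hb : b ∈ CR f) :
    ChainTo f (f a) b := by
  intro δ hδ
  obtain ⟨η, hη, hηδ, hfη⟩ := hf.exists_le_forall_dist_apply_le (by positivity : 0 < δ / 3)
  obtain ⟨k, hk⟩ := chainReach_iff_exists_chainInLen.mp (h η hη)
  obtain ⟨l, hl⟩ := chainReach_iff_exists_chainInLen.mp (hb η hη)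
  have hk0 := hk.1
  have hl0 := hl.1
  obtain ⟨a₁, ha₁, hrest⟩ :=
    ((show k + l = (k + l - 1) + 1 by omega) ▸ hk.append hl).exists_tail (by omega)
  exact (hrest.chainReach.perturb hfη ha₁ (by simpa using hη.le)).mono (by linarith)

theorem IsChainComponent.mapsTo (hf : UniformContinuous f) (hC : IsChainComponent f C) :
    MapsTo f C C := by
  obtain ⟨p, hp, rfl⟩ := hC
  rintro u ⟨-, hpu, hup⟩
  have hpfu : ChainTo f p (f u) := fun δ hδ => (hpu δ hδ).trans (chainReach_apply hδ.le u)
  have hfup : ChainTo f (f u) p := hup.apply_left hf hp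
  exact ⟨fun δ hδ => (hfup δ hδ).trans (hpfu δ hδ), hpfu, hfup⟩

theorem IsChainComponent.chainTransitiveOn [CompactSpace X] (hf : UniformContinuous f)
    (hC : IsChainComponent f C) : ChainTransitiveOn f C := by
  obtain ⟨p, -, hC⟩ := hC
  intro u hu v hv δ hδ
  obtain ⟨η, hη, hηδ, hfη⟩ := hf.exists_le_forall_dist_apply_le (by positivity : 0 < δ / 3)
  -- A fine chain from `u` to `v` stays `δ₁`-chain equivalent to `p`, hence `η`-close to `C`,
  -- so it can be pushed into `C`.
  obtain ⟨δ₁, hδ₁, hsub⟩ := exists_deltaChainClass_subset (p := p) hf isOpen_thickening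
    (fun q hq => self_subset_thickening hη C
      (hC ▸ ⟨fun ε hε => (hq.2 ε hε).trans (hq.1 ε hε), hq.1, hq.2⟩))
  have hδ' : 0 < min δ₁ (δ / 3) := lt_min hδ₁ (by positivity)
  have hmem : ∀ q ∈ C, q ∈ deltaChainClass f (min δ₁ (δ / 3)) p := fun q hq => by
    rw [hC] at hq
    exact ⟨hq.2.1 _ hδ', hq.2.2 _ hδ'⟩
  have hnear : ∀ q ∈ deltaChainClass f (min δ₁ (δ / 3)) p, ∃ r ∈ C, dist r q ≤ η := fun q hq => by
    obtain ⟨r, hr, hqr⟩ := mem_thickening_iff.mp (hsub (deltaChainClass_mono (min_le_left _ _) hq))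
    exact ⟨r, hr, dist_comm q r ▸ hqr.le⟩
  obtain ⟨L, hL⟩ := chainReach_iff_exists_chainInLen.mp ((hmem u hu).2.trans (hmem v hv).1)
  exact ⟨L, ((hL.to_deltaChainClass (hmem u hu) (hmem v hv)).perturb hfη hnear hu hv
    (by simpa using hη.le) (by simpa using hη.le)).mono
    (by linarith [min_le_right δ₁ (δ / 3)])⟩

end ChainComponent

section Lengths

variable {f : X → X} {S : Set X} {δ : ℝ} {p q : X} {l L₁ L₂ : ℕ}

theorem ChainTransitiveOn.exists_chainInLen_le (hf : UniformContinuous f) (hS : TotallyBounded S)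
    (h : ChainTransitiveOn f S) (hδ : 0 < δ) :
    ∃ B, ∀ u ∈ S, ∀ v ∈ S, ∃ L ≤ B, ChainInLen f S δ u v L := by
  obtain ⟨η, hη, hηδ, hfη⟩ := hf.exists_le_forall_dist_apply_le (by positivity : 0 < δ / 3)
  obtain ⟨t, htS, htfin, hcov⟩ := Metric.finite_approx_of_totallyBounded hS η hη
  choose! len hlen using fun a (ha : a ∈ t) b (hb : b ∈ t) =>
    h a (htS ha) b (htS hb) (δ / 3) (by positivity)
  obtain ⟨B, hB⟩ := ((htfin.prod htfin).image fun ab => len ab.1 ab.2).bddAbove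
  refine ⟨B, fun u hu v hv => ?_⟩
  obtain ⟨a, ha, hua⟩ := mem_iUnion₂.mp (hcov hu)
  obtain ⟨b, hb, hvb⟩ := mem_iUnion₂.mp (hcov hv)
  refine ⟨len a b, hB ⟨(a, b), ⟨ha, hb⟩, rfl⟩, ?_⟩
  exact ((hlen a ha b hb).perturb hfη (fun q hq => ⟨q, hq, by simpa using hη.le⟩) hu hv hua.le
    (dist_comm v b ▸ hvb.le)).mono (by linarith)

lemma eventually_chainInLen_self_of_dvd (f : X → X) (S : Set X) (δ : ℝ) (p : X) :
    ∀ᶠ m in atTop, Nat.setGcd {k | ChainInLen f S δ p p k} ∣ m → ChainInLen f S δ p p m := by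
  have hclosure : ∀ m ∈ AddSubmonoid.closure {k | ChainInLen f S δ p p k},
      m = 0 ∨ ChainInLen f S δ p p m := fun m hm => by
    induction hm using AddSubmonoid.closure_induction with
    | mem k hk => exact Or.inr hk
    | zero => exact Or.inl rfl
    | add a b _ _ ha hb =>
      rcases ha with rfl | ha <;> rcases hb with rfl | hb
      exacts [Or.inl rfl, Or.inr (by simpa using hb), Or.inr ha, Or.inr (ha.append hb)]
  obtain ⟨N, hN⟩ := Nat.exists_mem_closure_of_ge {k | ChainInLen f S δ p p k}
  filter_upwards [eventually_ge_atTop (N + 1)] with m hm hdvd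
  exact (hclosure m (hN m (by omega) hdvd)).resolve_left (by omega)

lemma ChainInLen.modEq (hq : ChainInReach f S δ q p) (h₁ : ChainInLen f S δ p q L₁)
    (h₂ : ChainInLen f S δ p q L₂) : L₁ ≡ L₂ [MOD Nat.setGcd {k | ChainInLen f S δ p p k}] := by
  obtain ⟨r, hr⟩ := hq
  have e₁ : L₁ + r ≡ 0 [MOD Nat.setGcd {k | ChainInLen f S δ p p k}] :=
    Nat.modEq_zero_iff_dvd.mpr (Nat.setGcd_dvd_of_mem (h₁.append hr))
  have e₂ : L₂ + r ≡ 0 [MOD Nat.setGcd {k | ChainInLen f S δ p p k}] :=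
    Nat.modEq_zero_iff_dvd.mpr (Nat.setGcd_dvd_of_mem (h₂.append hr))
  exact Nat.ModEq.add_right_cancel' r (e₁.trans e₂.symm)

lemma ChainTransitiveOn.setGcd_dvd_of_mem_cycLengths (h : ChainTransitiveOn f S) (hp : p ∈ S)
    (hδ : 0 < δ) (hl : l ∈ cycLengths f S δ) : Nat.setGcd {k | ChainInLen f S δ p p k} ∣ l := by
  obtain ⟨u, hu, hcyc⟩ := hl
  obtain ⟨s, hs⟩ := h p hp u hu δ hδ
  have : s + l ≡ s + 0 [MOD _] := (hs.append hcyc).modEq (h u hu p hp δ hδ) hs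
  exact Nat.modEq_zero_iff_dvd.mp (Nat.ModEq.add_left_cancel' s this)

theorem exists_chainInLen_iterate (hf : UniformContinuous f) (hmaps : MapsTo f S S)
    (h : ChainTransitiveOn f S) (hS : TotallyBounded S) (hp : p ∈ S) (hδ : 0 < δ) :
    ∃ k, ∀ n, ∀ d ∈ classCdelta f S δ p, ∀ e ∈ classCdelta f S δ p,
      ChainInLen f S δ (f^[n] d) (f^[n + k] e) k := by
  set g := Nat.setGcd {k | ChainInLen f S δ p p k}
  obtain ⟨N, hN⟩ := eventually_atTop.mp (eventually_chainInLen_self_of_dvd f S δ p)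
  obtain ⟨B, hB⟩ := h.exists_chainInLen_le hf hS hδ
  have hg : 0 < g := by
    obtain ⟨m, hm⟩ := h p hp p hp δ hδ
    exact Nat.pos_of_dvd_of_pos (Nat.setGcd_dvd_of_mem hm) hm.1
  have hgS : ∀ d ∈ classCdelta f S δ p, ∃ k, g ∣ k ∧ ChainInLen f S δ p d k := by
    rintro d ⟨-, k, hk, hdk⟩
    exact ⟨k, hk g fun l hl => h.setGcd_dvd_of_mem_cycLengths hp hδ hl, hdk⟩
  refine ⟨g * (N + 2 * B), fun n d hd e he => ?_⟩
  set k := g * (N + 2 * B)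
  have hk : N + 2 * B ≤ k := Nat.le_mul_of_pos_left _ hg
  obtain ⟨k₁, hg₁, hd₁⟩ := hgS d hd
  obtain ⟨k₂, hg₂, he₂⟩ := hgS e he
  obtain ⟨α, hαB, hα⟩ := hB _ (hmaps.iterate n hd.1) p hp
  obtain ⟨β, hβB, hβ⟩ := hB p hp _ (hmaps.iterate (n + k) he.1)
  -- `p → d → f^n d → p → f^(n+k) e` and `p → e → f^(n+k) e` have congruent lengths, so `g ∣ α + β`
  -- and the gap `k - (α + β)` is filled by a cycle at `p`.
  have hmod := (((hd₁.append_iterate hmaps hδ.le n).append hα).append hβ).modEq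
    (h _ (hmaps.iterate _ he.1) p hp δ hδ) (he₂.append_iterate hmaps hδ.le (n + k))
  have hgαβ : g ∣ α + β := by
    rw [← ZMod.natCast_eq_zero_iff] at hg₁ hg₂ ⊢
    have hgk : (k : ZMod g) = 0 := (ZMod.natCast_eq_zero_iff _ _).mpr (dvd_mul_right g _)
    have := (ZMod.natCast_eq_natCast_iff _ _ _).mpr hmod
    push_cast at this ⊢
    linear_combination this - hg₁ + hg₂ + hgk
  have hcyc := hN (k - (α + β)) (by omega) (Nat.dvd_sub (dvd_mul_right g _) hgαβ)
  have hlen : α + (k - (α + β)) + β = k := by omega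
  have hchain := (hα.append hcyc).append hβ
  rwa [hlen] at hchain

end Lengths

lemma exists_limitPseudoOrbit_splice {f : X → X} {S : Set X} {δ : ℝ} {x y a b : X} {n k : ℕ}
    (hn : 0 < n) (hw : ChainInLen f S δ a b k) (hy : dist (f^[n] y) a ≤ δ)
    (hx : dist (f^[n + k] x) b ≤ δ) :
    ∃ p : ℕ → X, LimitPseudoOrbit f (2 * δ) p ∧ p 0 = y ∧ ∀ i ≥ n + k, p i = f^[i] x := by
  obtain ⟨hk, w, -, rfl, rfl, hw⟩ := hw
  have hδ : 0 ≤ δ := dist_nonneg.trans hy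
  set p : ℕ → X := fun i => if i < n then f^[i] y else if i < n + k then w (i - n) else f^[i] x
    with hp
  have hhead : ∀ i < n, p i = f^[i] y := fun i hi => if_pos hi
  have hmid : ∀ i ≥ n, i < n + k → p i = w (i - n) := fun i hi hi' => by
    simp only [hp, if_neg (not_lt.mpr hi), if_pos hi']
  have htail : ∀ i ≥ n + k, p i = f^[i] x := fun i hi => by
    simp only [hp, if_neg (show ¬ i < n by omega), if_neg (not_lt.mpr hi)]
  have hjump : ∀ i, dist (f (p i)) (p (i + 1)) ≤ 2 * δ := by
    intro i
    rcases lt_trichotomy (i + 1) n with h | h | h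
    · rw [hhead i (by omega), hhead (i + 1) h, Function.iterate_succ_apply', dist_self]
      positivity
    · rw [hhead i (by omega), hmid (i + 1) h.ge (by omega), ← Function.iterate_succ_apply' f i y,
        Nat.succ_eq_add_one, h, Nat.sub_self]
      linarith
    rcases lt_trichotomy (i + 1) (n + k) with h' | h' | h'
    · rw [hmid i (by omega) (by omega), hmid (i + 1) (by omega) h',
        show i + 1 - n = i - n + 1 by omega]
      linarith [hw (i - n) (by omega)]
    · rw [hmid i (by omega) (by omega), htail (i + 1) h'.ge]
      calc dist (f (w (i - n))) (f^[i + 1] x)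
          ≤ dist (f (w (i - n))) (w (i - n + 1)) + dist (f^[i + 1] x) (w k) :=
            (dist_triangle _ _ _).trans_eq (by rw [show i - n + 1 = k by omega, dist_comm (w k)])
        _ ≤ 2 * δ := by linarith [hw (i - n) (by omega), h' ▸ hx]
    · rw [htail i (by omega), htail (i + 1) (by omega), Function.iterate_succ_apply', dist_self]
      positivity
  refine ⟨p, ⟨hjump, tendsto_const_nhds.congr' ?_⟩, hhead 0 hn, htail⟩
  filter_upwards [eventually_ge_atTop (n + k)] with i hi
  rw [htail i hi, htail (i + 1) (by omega), Function.iterate_succ_apply', dist_self]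

section StableSet

variable {f : X → X} {C : Set X} {δ : ℝ} {x₀ x z : X}

lemma tendsto_infDist_of_tendsto_dist {u v : ℕ → X} {A : ℕ → Set X}
    (hu : Tendsto (fun i => infDist (u i) (A i)) atTop (𝓝 0))
    (huv : Tendsto (fun i => dist (v i) (u i)) atTop (𝓝 0)) :
    Tendsto (fun i => infDist (v i) (A i)) atTop (𝓝 0) :=
  squeeze_zero (fun _ => infDist_nonneg) (fun _ => infDist_le_infDist_add_dist)
    (by simpa using hu.add huv)

lemma mem_Vs_of_tendsto_dist (hx : x ∈ Vs f C x₀)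
    (h : Tendsto (fun i => dist (f^[i] z) (f^[i] x)) atTop (𝓝 0)) : z ∈ Vs f C x₀ :=
  ⟨tendsto_infDist_of_tendsto_dist hx.1 h,
    fun δ hδ => tendsto_infDist_of_tendsto_dist (hx.2 δ hδ) h⟩

lemma self_mem_classCdelta (h : ChainInReach f C δ x₀ x₀) : x₀ ∈ classCdelta f C δ x₀ :=
  let ⟨m, hm⟩ := h
  ⟨hm.left_mem, m, fun _ hd => hd m ⟨x₀, hm.left_mem, hm⟩, hm⟩

lemma eventually_exists_dist_lt_of_mem_Vs (hx : x ∈ Vs f C x₀)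
    (hne : (classCdelta f C δ x₀).Nonempty) (hδ : 0 < δ) :
    ∀ᶠ i in atTop, ∃ d ∈ classCdelta f C δ x₀, dist (f^[i] x) (f^[i] d) < δ := by
  filter_upwards [(hx.2 δ hδ).eventually (gt_mem_nhds hδ)] with i hi
  simpa using (infDist_lt_iff (hne.image _)).mp hi

end StableSet

/-- Under s-limit shadowing, for any `x, y ∈ V^s(D)` and `ε > 0` there is
`z ∈ V^s(D)` with `d(y,z) ≤ ε` whose orbit is asymptotic to that of `x`. -/
theorem stmt17 {X : Type*} [MetricSpace X] [CompactSpace X]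
    (f : X → X) (hf : Continuous f) (hs : SLimitShadowing f)
    (C : Set X) (hC : IsChainComponent f C) (x₀ : X) (hx₀ : x₀ ∈ C)
    (x y : X) (hx : x ∈ Vs f C x₀) (hy : y ∈ Vs f C x₀) (ε : ℝ) (hε : 0 < ε) :
    ∃ z ∈ Vs f C x₀, dist y z ≤ ε ∧
      Tendsto (fun i => dist (f^[i] x) (f^[i] z)) atTop (𝓝 0) := by
  have hfu := CompactSpace.uniformContinuous_of_continuous hf
  have hT := hC.chainTransitiveOn hfu
  obtain ⟨δ, hδ, hshad⟩ := hs ε hε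
  obtain ⟨k, hk⟩ := exists_chainInLen_iterate hfu (hC.mapsTo hfu) hT
    (isCompact_univ.totallyBounded.subset (subset_univ C)) hx₀ (half_pos hδ)
  have hne : (classCdelta f C (δ / 2) x₀).Nonempty :=
    ⟨x₀, self_mem_classCdelta (hT x₀ hx₀ x₀ hx₀ _ (half_pos hδ))⟩
  obtain ⟨n, ⟨⟨d, hd, hyd⟩, e, he, hxe⟩, hn⟩ :=
    (((eventually_exists_dist_lt_of_mem_Vs hy hne (half_pos hδ)).and
      ((tendsto_add_atTop_nat k).eventually
        (eventually_exists_dist_lt_of_mem_Vs hx hne (half_pos hδ)))).and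
      (eventually_gt_atTop 0)).exists
  obtain ⟨p, hp, hp0, hpx⟩ := exists_limitPseudoOrbit_splice hn (hk n d hd e he) hyd.le hxe.le
  rw [mul_div_cancel₀ δ two_ne_zero] at hp
  obtain ⟨z, hz, hzp⟩ := hshad p hp
  have hzx : Tendsto (fun i => dist (f^[i] z) (f^[i] x)) atTop (𝓝 0) :=
    hzp.congr' (eventually_atTop.mpr ⟨n + k, fun i hi => by rw [hpx i hi]⟩)
  refine ⟨z, mem_Vs_of_tendsto_dist hx hzx, ?_, ?_⟩
  · simpa [hp0, dist_comm] using hz 0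
  · simpa only [dist_comm] using hzx
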